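/- Let n be a unit vector in ℝ³ and P := I - n nᵀ, and let A be a real 3×3 matrix with P·A·P = A. If μ_Γ ≥ 0 and λ_Γ ≥ -μ_Γ are real numbers, then λ_Γ·tr(A)² + (1/2)·μ_Γ·tr((A + Aᵀ)·(A + Aᵀ)) ≥ (λ_Γ + μ_Γ)·tr(A)² ≥ 0. In particular, the pointwise interfacial viscous dissipation density is nonnegative under the weakened Boussinesq–Scriven condition λ_Γ ≥ -μ_Γ. -/

import Mathlib

/-!
The Frobenius inner product of `S := A + Aᵀ` with the projection `P` is `tr (P S) = tr S = 2 tr A`,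
because `S` is also compressed by `P`. Cauchy–Schwarz then gives
`(2 tr A)² ≤ ‖P‖² ‖S‖² = tr P · tr (S S) = 2 tr (S S)`, i.e. `tr A² ≤ ½ tr (S S)`:
the shear term alone dominates `μ_Γ tr A²`, which leaves `(λ_Γ + μ_Γ) tr A² ≥ 0`.
-/

open Matrix

namespace Matrix

variable {ι : Type*}

section Projection

variable [DecidableEq ι] (n : ι → ℝ)

theorem transpose_one_sub_vecMulVec_self : (1 - vecMulVec n n)ᵀ = 1 - vecMulVec n n := by
  rw [transpose_sub, transpose_one, transpose_vecMulVec]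

variable [Fintype ι] {n}

theorem one_sub_vecMulVec_self_mul_self (hn : n ⬝ᵥ n = 1) :
    (1 - vecMulVec n n) * (1 - vecMulVec n n) = 1 - vecMulVec n n := by
  have hQ : vecMulVec n n * vecMulVec n n = vecMulVec n n := by
    rw [vecMulVec_mul_vecMulVec, hn, one_smul]
  rw [sub_mul, mul_sub, mul_sub, hQ, one_mul, mul_one, one_mul]
  abel

theorem trace_one_sub_vecMulVec_self (hn : n ⬝ᵥ n = 1) :
    (1 - vecMulVec n n).trace = Fintype.card ι - 1 := by
  rw [trace_sub, trace_one, trace_vecMulVec, hn]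

end Projection

variable [Fintype ι]

theorem trace_transpose_mul_sq_le {κ : Type*} [Fintype κ] (A B : Matrix ι κ ℝ) :
    (Aᵀ * B).trace ^ 2 ≤ (Aᵀ * A).trace * (Bᵀ * B).trace := by
  have h (A B : Matrix ι κ ℝ) : (Aᵀ * B).trace = ∑ p : κ × ι, A p.2 p.1 * B p.2 p.1 := by
    simp only [trace, diag_apply, mul_apply, transpose_apply, Fintype.sum_prod_type]
  simp only [h, ← sq]
  exact Finset.sum_mul_sq_le_sq_mul_sq _ _ _

variable {P : Matrix ι ι ℝ}

theorem trace_sq_le_trace_mul_of_mul_mul_eq (hPt : Pᵀ = P) (hPP : P * P = P) {S : Matrix ι ι ℝ}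
    (hS : P * S * P = S) : S.trace ^ 2 ≤ P.trace * (Sᵀ * S).trace := by
  have hSP : S.trace = (Pᵀ * S).trace := by
    rw [hPt]
    conv_lhs => rw [← hS, trace_mul_cycle, hPP]
  calc S.trace ^ 2 = (Pᵀ * S).trace ^ 2 := by rw [hSP]
    _ ≤ (Pᵀ * P).trace * (Sᵀ * S).trace := trace_transpose_mul_sq_le P S
    _ = P.trace * (Sᵀ * S).trace := by rw [hPt, hPP]

theorem four_mul_trace_sq_le (hPt : Pᵀ = P) (hPP : P * P = P) {A : Matrix ι ι ℝ}
    (hA : P * A * P = A) : 4 * A.trace ^ 2 ≤ P.trace * ((A + Aᵀ) * (A + Aᵀ)).trace := by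
  have hAt : P * Aᵀ * P = Aᵀ := by
    simpa only [transpose_mul, hPt, mul_assoc] using congrArg transpose hA
  have hS : P * (A + Aᵀ) * P = A + Aᵀ := by rw [mul_add, add_mul, hA, hAt]
  have hSt : (A + Aᵀ)ᵀ = A + Aᵀ := by rw [transpose_add, transpose_transpose, add_comm]
  have key := trace_sq_le_trace_mul_of_mul_mul_eq hPt hPP hS
  rw [hSt, trace_add, trace_transpose] at key
  linarith

end Matrix

/-- Nonnegativity of the pointwise interfacial viscous dissipation density under the
weakened Boussinesq–Scriven condition `λ_Γ ≥ -μ_Γ`, `μ_Γ ≥ 0`: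
`λ_Γ·tr(A)² + (1/2)·μ_Γ·tr((A + Aᵀ)²) ≥ (λ_Γ + μ_Γ)·tr(A)² ≥ 0`. -/
theorem surface_dissipation_nonneg
    (n : Fin 3 → ℝ) (hn : ∑ i, n i ^ 2 = 1)
    (P : Matrix (Fin 3) (Fin 3) ℝ) (hP : P = 1 - Matrix.vecMulVec n n)
    (A : Matrix (Fin 3) (Fin 3) ℝ) (hA : P * A * P = A)
    (lamΓ muΓ : ℝ) (hmu : 0 ≤ muΓ) (hlam : -muΓ ≤ lamΓ) :
    (lamΓ + muΓ) * A.trace ^ 2 ≤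
        lamΓ * A.trace ^ 2 + (1 / 2) * muΓ * ((A + Aᵀ) * (A + Aᵀ)).trace ∧
      0 ≤ (lamΓ + muΓ) * A.trace ^ 2 := by
  have hn' : n ⬝ᵥ n = 1 := by simpa only [dotProduct, ← sq] using hn
  have hPtr : P.trace = 2 := by
    rw [hP, trace_one_sub_vecMulVec_self hn', Fintype.card_fin]
    norm_num
  have hA2 := four_mul_trace_sq_le (hP ▸ transpose_one_sub_vecMulVec_self n)
    (hP ▸ one_sub_vecMulVec_self_mul_self hn') hA
  rw [hPtr] at hA2
  constructor
  · linarith [mul_le_mul_of_nonneg_left hA2 hmu]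
  · have : 0 ≤ lamΓ + muΓ := by linarith
    positivity
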